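/- CD+ does not prove the sentence (∀φ ∈ Sent(L_D))(TTφ ∨ TFφ → Dφ); that is, the converse of the CD+-provable implication Dφ → TTφ ∨ TFφ is unprovable in CD+. -/

import Mathlib

/- ------------------------------------------------------------------------
Self-contained framework formalizing the setting of Castaldo & Nicolai,
"On Classical Determinate Truth": the languages `L_ℕ ⊆ L_T ⊆ L_D` (with
finitely many function symbols for elementary syntactic operations and a
canonical Gödel numbering), the Fujimoto–Halbach theory `CD⁺`, its variants
`CD⁺↾`, `CD⁺↾cp`, `CD⁺↾sym` with a *defined* determinateness predicate, the
classical closures `CKF`, `CKFcp` of Kripke–Feferman truth, `KF + CONS` and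
`CT[KF + CONS]`, the Strong Kleene jump `𝒦` and its fixed-point semantics.

Provability `Proves` is rendered as semantic consequence over arbitrary
(Type-0) structures of the language, which by Gödel completeness and
downward Löwenheim–Skolem coincides with first-order derivability.  The
arithmetical base of all theories is rendered as the set of all true
arithmetical-syntactic sentences together with the induction schema for the
full language (induction for `T` and `D` as in the paper).
------------------------------------------------------------------------ -/

namespace CDT

attribute [local instance] Classical.propDecidable

/-- Terms of the arithmetical language `L_ℕ`, including function symbols for
the elementary syntactic operations on Gödel codes:
`num` (numeral function), `fneg`/`fand`/`fall`/`feq`/`fT`/`fD` (building codes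
of negations, conjunctions, universal quantifications, equations, `T`- and
`D`-ascriptions), `fsub` (formal substitution), `tneg` (term-level composition
with `fneg`, used for the falsity predicate `F`), `uall`/`uex` (codes of
`∀t Tφ(t)` and `∃t Fφ(t)`), and `evalt` (evaluation `t ↦ t°` of closed terms). -/
inductive Term : Type
  | var   : ℕ → Term
  | zero  : Term
  | succ  : Term → Term
  | add   : Term → Term → Term
  | mul   : Term → Term → Term
  | num   : Term → Term
  | fneg  : Term → Term
  | fand  : Term → Term → Term
  | fall  : Term → Term → Term
  | feq   : Term → Term → Term
  | fT    : Term → Term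
  | fD    : Term → Term
  | fsub  : Term → Term → Term → Term
  | tneg  : Term → Term
  | uall  : Term → Term → Term
  | uex   : Term → Term → Term
  | evalt : Term → Term
  deriving DecidableEq

/-- Formulas of the language `L_D = L_ℕ ∪ {T, D}` (together with the further
Tarskian truth predicate `Tb` = `𝐓` of `CT[KF+CONS]`, and with primitive
predicate symbols for the elementary syntactic guards `Cterm`, `Sent_{L_T}`,
`Sent_{L_D}`, `Fml¹_{L_T}`, `Fml¹_{L_D}`).  `L_T`-formulas are those without
`D` and `Tb`. -/
inductive Fml : Type
  | eq    : Term → Term → Fml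
  | T     : Term → Fml
  | D     : Term → Fml
  | Tb    : Term → Fml
  | ct    : Term → Fml
  | sentT : Term → Fml
  | sentD : Term → Fml
  | fml1T : Term → Term → Fml
  | fml1D : Term → Term → Fml
  | not   : Fml → Fml
  | and   : Fml → Fml → Fml
  | all   : ℕ → Fml → Fml
  deriving DecidableEq

/-- Defined connectives (classical). -/
def Fml.imp (A B : Fml) : Fml := (A.and B.not).not
def Fml.or (A B : Fml) : Fml := (A.not.and B.not).not
def Fml.iff (A B : Fml) : Fml := (A.imp B).and (B.imp A)
def Fml.ex (k : ℕ) (A : Fml) : Fml := (Fml.all k A.not).not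

/-- Free variables of a term. -/
def Term.fv : Term → Finset ℕ
  | .var n => {n}
  | .zero => ∅
  | .succ t => t.fv
  | .add s t => s.fv ∪ t.fv
  | .mul s t => s.fv ∪ t.fv
  | .num t => t.fv
  | .fneg t => t.fv
  | .fand s t => s.fv ∪ t.fv
  | .fall s t => s.fv ∪ t.fv
  | .feq s t => s.fv ∪ t.fv
  | .fT t => t.fv
  | .fD t => t.fv
  | .fsub e s k => e.fv ∪ s.fv ∪ k.fv
  | .tneg t => t.fv
  | .uall s t => s.fv ∪ t.fv
  | .uex s t => s.fv ∪ t.fv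
  | .evalt t => t.fv

/-- Free variables of a formula. -/
def Fml.fv : Fml → Finset ℕ
  | .eq s t => s.fv ∪ t.fv
  | .T t => t.fv
  | .D t => t.fv
  | .Tb t => t.fv
  | .ct t => t.fv
  | .sentT t => t.fv
  | .sentD t => t.fv
  | .fml1T s t => s.fv ∪ t.fv
  | .fml1D s t => s.fv ∪ t.fv
  | .not A => A.fv
  | .and A B => A.fv ∪ B.fv
  | .all k A => A.fv.erase k

/-- Substitution of a term for a variable in a term. -/
def Term.subst (k : ℕ) (s : Term) : Term → Term
  | .var n => if n = k then s else .var n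
  | .zero => .zero
  | .succ t => .succ (Term.subst k s t)
  | .add t u => .add (Term.subst k s t) (Term.subst k s u)
  | .mul t u => .mul (Term.subst k s t) (Term.subst k s u)
  | .num t => .num (Term.subst k s t)
  | .fneg t => .fneg (Term.subst k s t)
  | .fand t u => .fand (Term.subst k s t) (Term.subst k s u)
  | .fall t u => .fall (Term.subst k s t) (Term.subst k s u)
  | .feq t u => .feq (Term.subst k s t) (Term.subst k s u)
  | .fT t => .fT (Term.subst k s t)
  | .fD t => .fD (Term.subst k s t)
  | .fsub e t u => .fsub (Term.subst k s e) (Term.subst k s t) (Term.subst k s u)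
  | .tneg t => .tneg (Term.subst k s t)
  | .uall t u => .uall (Term.subst k s t) (Term.subst k s u)
  | .uex t u => .uex (Term.subst k s t) (Term.subst k s u)
  | .evalt t => .evalt (Term.subst k s t)

/-- Substitution of a (closed) term for a variable in a formula. -/
def Fml.subst (k : ℕ) (s : Term) : Fml → Fml
  | .eq t u => .eq (Term.subst k s t) (Term.subst k s u)
  | .T t => .T (Term.subst k s t)
  | .D t => .D (Term.subst k s t)
  | .Tb t => .Tb (Term.subst k s t)
  | .ct t => .ct (Term.subst k s t)
  | .sentT t => .sentT (Term.subst k s t)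
  | .sentD t => .sentD (Term.subst k s t)
  | .fml1T t u => .fml1T (Term.subst k s t) (Term.subst k s u)
  | .fml1D t u => .fml1D (Term.subst k s t) (Term.subst k s u)
  | .not A => (Fml.subst k s A).not
  | .and A B => (Fml.subst k s A).and (Fml.subst k s B)
  | .all m A => if m = k then .all m A else .all m (Fml.subst k s A)

/-- The formula contains no occurrence of the truth predicate `T`. -/
def Fml.noT : Fml → Prop
  | .T _ => False
  | .not A => A.noT
  | .and A B => A.noT ∧ B.noT
  | .all _ A => A.noT
  | _ => True

/-- The formula contains no occurrence of the determinateness predicate `D`. -/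
def Fml.noD : Fml → Prop
  | .D _ => False
  | .not A => A.noD
  | .and A B => A.noD ∧ B.noD
  | .all _ A => A.noD
  | _ => True

/-- The formula contains no occurrence of the Tarskian predicate `𝐓`. -/
def Fml.noTb : Fml → Prop
  | .Tb _ => False
  | .not A => A.noTb
  | .and A B => A.noTb ∧ B.noTb
  | .all _ A => A.noTb
  | _ => True

/-- `A` is a sentence of `L_T`. -/
def IsSentT (A : Fml) : Prop := A.noD ∧ A.noTb ∧ A.fv = ∅

/-- `A` is a sentence of `L_D`. -/
def IsSentD (A : Fml) : Prop := A.noTb ∧ A.fv = ∅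

/-- The numeral of a natural number. -/
def numeral : ℕ → Term
  | 0 => .zero
  | n + 1 => .succ (numeral n)

/-- The canonical Gödel numbering of terms (injective by construction,
via the Cantor pairing function). -/
def Term.code : Term → ℕ
  | .var n => Nat.pair 1 n
  | .zero => Nat.pair 2 0
  | .succ t => Nat.pair 3 t.code
  | .add s t => Nat.pair 4 (Nat.pair s.code t.code)
  | .mul s t => Nat.pair 5 (Nat.pair s.code t.code)
  | .num t => Nat.pair 6 t.code
  | .fneg t => Nat.pair 7 t.code
  | .fand s t => Nat.pair 8 (Nat.pair s.code t.code)
  | .fall s t => Nat.pair 9 (Nat.pair s.code t.code)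
  | .feq s t => Nat.pair 10 (Nat.pair s.code t.code)
  | .fT t => Nat.pair 11 t.code
  | .fD t => Nat.pair 12 t.code
  | .fsub e s k => Nat.pair 13 (Nat.pair e.code (Nat.pair s.code k.code))
  | .tneg t => Nat.pair 14 t.code
  | .uall s t => Nat.pair 15 (Nat.pair s.code t.code)
  | .uex s t => Nat.pair 16 (Nat.pair s.code t.code)
  | .evalt t => Nat.pair 17 t.code

/-- The canonical Gödel numbering of formulas. -/
def Fml.code : Fml → ℕ
  | .eq s t => Nat.pair 101 (Nat.pair s.code t.code)
  | .T t => Nat.pair 102 t.code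
  | .D t => Nat.pair 103 t.code
  | .Tb t => Nat.pair 104 t.code
  | .ct t => Nat.pair 105 t.code
  | .sentT t => Nat.pair 106 t.code
  | .sentD t => Nat.pair 107 t.code
  | .fml1T s t => Nat.pair 108 (Nat.pair s.code t.code)
  | .fml1D s t => Nat.pair 109 (Nat.pair s.code t.code)
  | .not A => Nat.pair 110 A.code
  | .and A B => Nat.pair 111 (Nat.pair A.code B.code)
  | .all k A => Nat.pair 112 (Nat.pair k A.code)

/-- Partial decoding of terms (the partial inverse of `Term.code`). -/
noncomputable def decT (n : ℕ) : Option Term :=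
  if h : ∃ t : Term, t.code = n then some h.choose else none

/-- Partial decoding of formulas. -/
noncomputable def decF (n : ℕ) : Option Fml :=
  if h : ∃ A : Fml, A.code = n then some h.choose else none

/-! The standard interpretations of the syntactic function symbols. -/

noncomputable def opNum (n : ℕ) : ℕ := (numeral n).code
noncomputable def opFneg (n : ℕ) : ℕ :=
  match decF n with | some A => A.not.code | none => 0
noncomputable def opFand (m n : ℕ) : ℕ :=
  match decF m, decF n with | some A, some B => (A.and B).code | _, _ => 0
noncomputable def opFall (k n : ℕ) : ℕ :=
  match decF n with | some A => (Fml.all k A).code | none => 0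
noncomputable def opFeq (m n : ℕ) : ℕ :=
  match decT m, decT n with | some s, some t => (Fml.eq s t).code | _, _ => 0
noncomputable def opFT (n : ℕ) : ℕ :=
  match decT n with | some t => (Fml.T t).code | none => 0
noncomputable def opFD (n : ℕ) : ℕ :=
  match decT n with | some t => (Fml.D t).code | none => 0
noncomputable def opFsub (e m k : ℕ) : ℕ :=
  match decF e, decT m with | some A, some t => (A.subst k t).code | _, _ => 0
noncomputable def opTneg (n : ℕ) : ℕ :=
  match decT n with | some t => (Term.fneg t).code | none => 0
/-- `opUall k ⌜φ⌝` is the code of the `L_T`-sentence `∀t T(φ(t/v_k))`. -/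
noncomputable def opUall (k n : ℕ) : ℕ :=
  (Fml.all 0 ((Fml.ct (.var 0)).imp
    (Fml.T (.fsub (numeral n) (.var 0) (numeral k))))).code
/-- `opUex k ⌜φ⌝` is the code of the `L_T`-sentence `∃t F(φ(t/v_k))`. -/
noncomputable def opUex (k n : ℕ) : ℕ :=
  ((Fml.all 0 ((Fml.ct (.var 0)).imp
    (Fml.not (Fml.T (.fneg (.fsub (numeral n) (.var 0) (numeral k))))))).not).code

/-- Evaluation of terms, with the evaluation symbol `evalt` sent to `0`
(auxiliary for the standard interpretation `opEval` of `evalt`). -/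
noncomputable def Term.val0 (σ : ℕ → ℕ) : Term → ℕ
  | .var n => σ n
  | .zero => 0
  | .succ t => t.val0 σ + 1
  | .add s t => s.val0 σ + t.val0 σ
  | .mul s t => s.val0 σ * t.val0 σ
  | .num t => opNum (t.val0 σ)
  | .fneg t => opFneg (t.val0 σ)
  | .fand s t => opFand (s.val0 σ) (t.val0 σ)
  | .fall s t => opFall (s.val0 σ) (t.val0 σ)
  | .feq s t => opFeq (s.val0 σ) (t.val0 σ)
  | .fT t => opFT (t.val0 σ)
  | .fD t => opFD (t.val0 σ)
  | .fsub e s k => opFsub (e.val0 σ) (s.val0 σ) (k.val0 σ)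
  | .tneg t => opTneg (t.val0 σ)
  | .uall s t => opUall (s.val0 σ) (t.val0 σ)
  | .uex s t => opUex (s.val0 σ) (t.val0 σ)
  | .evalt _ => 0

/-- The standard interpretation of the evaluation symbol: `⌜t⌝ ↦ t°`. -/
noncomputable def opEval (n : ℕ) : ℕ :=
  match decT n with
  | some t => t.val0 (fun _ => (0 : ℕ))
  | none => 0

/-! Arithmetical (standard) interpretations of the syntactic guards. -/

def isCT (n : ℕ) : Prop := ∃ t : Term, t.code = n ∧ t.fv = ∅
def isSentTC (n : ℕ) : Prop := ∃ A : Fml, A.code = n ∧ IsSentT A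
def isSentDC (n : ℕ) : Prop := ∃ A : Fml, A.code = n ∧ IsSentD A
def isFml1TC (k n : ℕ) : Prop :=
  ∃ A : Fml, A.code = n ∧ A.noD ∧ A.noTb ∧ A.fv ⊆ {k}
def isFml1DC (k n : ℕ) : Prop :=
  ∃ A : Fml, A.code = n ∧ A.noTb ∧ A.fv ⊆ {k}

/-- First-order structures for the language (Type-0 domains suffice for
semantic consequence = provability, by completeness & Löwenheim–Skolem). -/
structure Struc where
  M : Type
  zero : M
  succ : M → M
  add : M → M → M
  mul : M → M → M
  num : M → M
  fneg : M → M
  fand : M → M → M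
  fall : M → M → M
  feq : M → M → M
  fT : M → M
  fD : M → M
  fsub : M → M → M → M
  tneg : M → M
  uall : M → M → M
  uex : M → M → M
  evalt : M → M
  T : M → Prop
  D : M → Prop
  Tb : M → Prop
  ct : M → Prop
  sentT : M → Prop
  sentD : M → Prop
  fml1T : M → M → Prop
  fml1D : M → M → Prop

/-- Evaluation of a term in a structure. -/
def Term.evalS (S : Struc) (σ : ℕ → S.M) : Term → S.M
  | .var n => σ n
  | .zero => S.zero
  | .succ t => S.succ (t.evalS S σ)
  | .add s t => S.add (s.evalS S σ) (t.evalS S σ)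
  | .mul s t => S.mul (s.evalS S σ) (t.evalS S σ)
  | .num t => S.num (t.evalS S σ)
  | .fneg t => S.fneg (t.evalS S σ)
  | .fand s t => S.fand (s.evalS S σ) (t.evalS S σ)
  | .fall s t => S.fall (s.evalS S σ) (t.evalS S σ)
  | .feq s t => S.feq (s.evalS S σ) (t.evalS S σ)
  | .fT t => S.fT (t.evalS S σ)
  | .fD t => S.fD (t.evalS S σ)
  | .fsub e s k => S.fsub (e.evalS S σ) (s.evalS S σ) (k.evalS S σ)
  | .tneg t => S.tneg (t.evalS S σ)
  | .uall s t => S.uall (s.evalS S σ) (t.evalS S σ)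
  | .uex s t => S.uex (s.evalS S σ) (t.evalS S σ)
  | .evalt t => S.evalt (t.evalS S σ)

/-- Tarskian satisfaction of a formula in a structure, under a valuation. -/
def Fml.SatS (S : Struc) : (ℕ → S.M) → Fml → Prop
  | σ, .eq s t => s.evalS S σ = t.evalS S σ
  | σ, .T t => S.T (t.evalS S σ)
  | σ, .D t => S.D (t.evalS S σ)
  | σ, .Tb t => S.Tb (t.evalS S σ)
  | σ, .ct t => S.ct (t.evalS S σ)
  | σ, .sentT t => S.sentT (t.evalS S σ)
  | σ, .sentD t => S.sentD (t.evalS S σ)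
  | σ, .fml1T s t => S.fml1T (s.evalS S σ) (t.evalS S σ)
  | σ, .fml1D s t => S.fml1D (s.evalS S σ) (t.evalS S σ)
  | σ, .not A => ¬ Fml.SatS S σ A
  | σ, .and A B => Fml.SatS S σ A ∧ Fml.SatS S σ B
  | σ, .all k A => ∀ m : S.M, Fml.SatS S (Function.update σ k m) A

/-- The standard model `(ℕ, XT, XD, XTb)`: standard arithmetic and syntax,
with `T`, `D` and `𝐓` interpreted by the given sets of codes. -/
noncomputable def stdStruc (XT XD XTb : Set ℕ) : Struc where
  M := ℕ
  zero := 0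
  succ := Nat.succ
  add := (· + ·)
  mul := (· * ·)
  num := opNum
  fneg := opFneg
  fand := opFand
  fall := opFall
  feq := opFeq
  fT := opFT
  fD := opFD
  fsub := opFsub
  tneg := opTneg
  uall := opUall
  uex := opUex
  evalt := opEval
  T := fun n => n ∈ XT
  D := fun n => n ∈ XD
  Tb := fun n => n ∈ XTb
  ct := isCT
  sentT := isSentTC
  sentD := isSentDC
  fml1T := isFml1TC
  fml1D := isFml1DC

/-- Satisfaction in the standard `L_T`-model `(ℕ, X)`. -/
def SatN (X : Set ℕ) (A : Fml) : Prop :=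
  Fml.SatS (stdStruc X ∅ ∅) (fun _ => (0 : ℕ)) A

/-- Satisfaction of all instances (closures) in the standard `L_T`-model. -/
def SatAll (X : Set ℕ) (A : Fml) : Prop :=
  ∀ σ : ℕ → ℕ, Fml.SatS (stdStruc X ∅ ∅) σ A

/-- `(ℕ, X) ⊨ Th` for an `L_T`-theory. -/
def ModelsN (X : Set ℕ) (Th : Set Fml) : Prop := ∀ A ∈ Th, SatAll X A

/-- Satisfaction in the standard `L_D`-model `(ℕ, XD, XT)` (`D` interpreted
by `XD`, `T` by `XT`). -/
def SatND (XD XT : Set ℕ) (A : Fml) : Prop :=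
  Fml.SatS (stdStruc XT XD ∅) (fun _ => (0 : ℕ)) A

/-- `(ℕ, XD, XT) ⊨ Th` for an `L_D`-theory. -/
def ModelsND (XD XT : Set ℕ) (Th : Set Fml) : Prop :=
  ∀ A ∈ Th, ∀ σ : ℕ → ℕ, Fml.SatS (stdStruc XT XD ∅) σ A

/-- Provability: semantic consequence over arbitrary structures (equivalent
to first-order derivability by Gödel's completeness theorem together with
downward Löwenheim–Skolem). -/
def Proves (Th : Set Fml) (A : Fml) : Prop :=
  ∀ (S : Struc) (σ : ℕ → S.M),
    (∀ B ∈ Th, ∀ τ : ℕ → S.M, Fml.SatS S τ B) → Fml.SatS S σ A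

/-- The evaluation `t°` of a closed term in the standard model. -/
noncomputable def tval (t : Term) : ℕ :=
  Term.evalS (stdStruc ∅ ∅ ∅) (fun _ => (0 : ℕ)) t

/-! ## The base theory: elementary syntax/arithmetic plus full induction -/

/-- The arithmetical-syntactic base: all true `L_ℕ`-sentences. -/
def BaseTh : Set Fml :=
  {A | A.noT ∧ A.noD ∧ A.noTb ∧ A.fv = ∅ ∧
    Fml.SatS (stdStruc ∅ ∅ ∅) (fun _ => (0 : ℕ)) A}

/-- Universal closure of a formula. -/
def Fml.close (A : Fml) : Fml :=
  (A.fv.sort (· ≤ ·)).foldr (fun k B => Fml.all k B) A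

/-- Induction axiom for `A` in the variable `v_k` (universally closed;
the schema is available for the full language, including `T`, `D`, `𝐓`). -/
def indAx (k : ℕ) (A : Fml) : Fml :=
  Fml.close (((A.subst k .zero).and
    (Fml.all k (A.imp (A.subst k (.succ (.var k)))))).imp (Fml.all k A))

/-- The full induction schema. -/
def IndTh : Set Fml := {B | ∃ (k : ℕ) (A : Fml), B = indAx k A}

/-! ## Abbreviations: iterated truth and falsity -/

def v0 : Term := .var 0
def v1 : Term := .var 1
def v2 : Term := .var 2
def v3 : Term := .var 3

/-- `⌜T t⌝` from `⌜t⌝`. -/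
def tmT (x : Term) : Term := .fT x
/-- `⌜F t⌝ = ⌜T(¬.t)⌝` from `⌜t⌝` (falsity as truth of the negation). -/
def tmF (x : Term) : Term := .fT (.tneg x)
/-- `TTφ`, i.e. `T⌜T(num φ)⌝`, for `φ` a sentence code. -/
def sTT (x : Term) : Fml := .T (tmT (.num x))
/-- `TFφ`, i.e. `T⌜F(num φ)⌝`, for `φ` a sentence code. -/
def sTF (x : Term) : Fml := .T (tmF (.num x))
/-- `TT t`, i.e. `T⌜T t⌝`, for `t` a closed-term code. -/
def tTT (x : Term) : Fml := .T (tmT x)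
/-- `TF t`, i.e. `T⌜F t⌝`, for `t` a closed-term code. -/
def tTF (x : Term) : Fml := .T (tmF x)

/-! ## The three definitions of determinateness -/

/-- `D x :↔ TTx ∨ TFx` (for consistent fixed points). -/
def dfCons (x : Term) : Fml := (sTT x).or (sTF x)
/-- `D x :↔ ¬TTx ∨ ¬TFx` (for complete fixed points). -/
def dfComp (x : Term) : Fml := ((sTT x).not).or ((sTF x).not)
/-- `D x :↔ (TTx ∨ TFx) ∧ (¬TTx ∨ ¬TFx)` (for symmetric fixed points). -/
def dfSym (x : Term) : Fml := (dfCons x).and (dfComp x)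

/-- `⌜D t⌝` for the primitive determinateness predicate. -/
def dcodePrim (x : Term) : Term := .fD x
/-- `⌜D t⌝` for a defined determinateness predicate `df`: the code of the
defining formula with `t` substituted for its variable. -/
noncomputable def dcodeOf (df : Term → Fml) (x : Term) : Term :=
  .fsub (numeral (df (.var 0)).code) x (numeral 0)

/-! ## The axioms of `CD⁺` (Fujimoto–Halbach), parametrized by the
determinateness predicate `df`, its code-builder `dc`, and the sentence and
formula guards `gS`, `gF` of the relevant language. -/

def axT1 : Fml :=
  .all 0 (.all 1 (((Fml.ct v0).and (Fml.ct v1)).imp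
    (Fml.iff (Fml.T (.feq v0 v1)) (.eq (.evalt v0) (.evalt v1)))))

def axT2p (df : Term → Fml) (dc : Term → Term) : Fml :=
  .all 0 ((Fml.ct v0).imp (Fml.iff (df (.evalt v0)) (Fml.T (dc v0))))

def axT3 (df : Term → Fml) : Fml :=
  .all 0 ((Fml.ct v0).imp ((df (.evalt v0)).imp
    (Fml.iff (tTT v0) (Fml.T (.evalt v0)))))

def axT4 (gS : Term → Fml) : Fml :=
  .all 0 ((gS v0).imp (Fml.iff (Fml.T (.fneg v0)) (Fml.not (Fml.T v0))))

def axT5 (gS : Term → Fml) : Fml :=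
  .all 0 (.all 1 (((gS v0).and (gS v1)).imp
    (Fml.iff (Fml.T (.fand v0 v1)) ((Fml.T v0).and (Fml.T v1)))))

def axT6 (gF : Term → Term → Fml) : Fml :=
  .all 0 (.all 1 ((gF v0 v1).imp
    (Fml.iff (Fml.T (.fall v0 v1))
      (.all 2 ((Fml.ct v2).imp (Fml.T (.fsub v1 v2 v0)))))))

def axD1 (df : Term → Fml) : Fml :=
  .all 0 (.all 1 (((Fml.ct v0).and (Fml.ct v1)).imp (df (.feq v0 v1))))

def axD2 (df : Term → Fml) : Fml :=
  .all 0 ((Fml.ct v0).imp (Fml.iff (df (tmT v0)) (df (.evalt v0))))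

def axD3 (df : Term → Fml) (dc : Term → Term) : Fml :=
  .all 0 ((Fml.ct v0).imp (Fml.iff (df (dc v0)) (df (.evalt v0))))

def axD4 (df : Term → Fml) (gS : Term → Fml) : Fml :=
  .all 0 ((gS v0).imp (Fml.iff (df (.fneg v0)) (df v0)))

def axD5 (df : Term → Fml) (gS : Term → Fml) : Fml :=
  .all 0 (.all 1 (((gS v0).and (gS v1)).imp
    (Fml.iff (df (.fand v0 v1))
      ((((df v0).and (df v1)).or ((df v0).and (Fml.T (.fneg v0)))).or
        ((df v1).and (Fml.T (.fneg v1)))))))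

def axD6 (df : Term → Fml) (gF : Term → Term → Fml) : Fml :=
  .all 0 (.all 1 ((gF v0 v1).imp
    (Fml.iff (df (.fall v0 v1))
      ((Fml.all 2 ((Fml.ct v2).imp (df (.fsub v1 v2 v0)))).or
        (Fml.ex 2 ((Fml.ct v2).and
          ((df (.fsub v1 v2 v0)).and (Fml.T (.fneg (.fsub v1 v2 v0))))))))))

def axR1 (gF : Term → Term → Fml) : Fml :=
  .all 0 (.all 1 (.all 2 (.all 3 (((gF v0 v1).and ((Fml.ct v2).and (Fml.ct v3))).imp
    ((Fml.eq (.evalt v2) (.evalt v3)).imp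
      (Fml.iff (Fml.T (.fsub v1 v2 v0)) (Fml.T (.fsub v1 v3 v0))))))))

def axR2 (df : Term → Fml) (gF : Term → Term → Fml) : Fml :=
  .all 0 (.all 1 (.all 2 (.all 3 (((gF v0 v1).and ((Fml.ct v2).and (Fml.ct v3))).imp
    ((Fml.eq (.evalt v2) (.evalt v3)).imp
      (Fml.iff (df (.fsub v1 v2 v0)) (df (.fsub v1 v3 v0))))))))

/-- The `CD⁺`-style axiom set over the base theory and full induction. -/
noncomputable def CDAx (df : Term → Fml) (dc : Term → Term)
    (gS : Term → Fml) (gF : Term → Term → Fml) : Set Fml :=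
  BaseTh ∪ IndTh ∪
    {axT1, axT2p df dc, axT3 df, axT4 gS, axT5 gS, axT6 gF,
     axD1 df, axD2 df, axD3 df dc, axD4 df gS, axD5 df gS, axD6 df gF,
     axR1 gF, axR2 df gF}

/-- Fujimoto–Halbach's `CD⁺`, with primitive `D`, in `L_D`. -/
noncomputable def CDplus : Set Fml := CDAx Fml.D dcodePrim Fml.sentD Fml.fml1D

/-- `CD⁺↾`: the axioms of `CD⁺` in `L_T` with `D x` defined as `TTx ∨ TFx`. -/
noncomputable def CDplusRes : Set Fml :=
  CDAx dfCons (dcodeOf dfCons) Fml.sentT Fml.fml1T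

/-- `CD⁺↾cp`: the axioms of `CD⁺` with `D x` defined as `¬TTx ∨ ¬TFx`. -/
noncomputable def CDplusResCp : Set Fml :=
  CDAx dfComp (dcodeOf dfComp) Fml.sentT Fml.fml1T

/-- `CD⁺↾sym`: the axioms of `CD⁺` with
`D x` defined as `(TTx ∨ TFx) ∧ (¬TTx ∨ ¬TFx)`. -/
noncomputable def CDplusResSym : Set Fml :=
  CDAx dfSym (dcodeOf dfSym) Fml.sentT Fml.fml1T

/-! ## The classical closure of Kripke–Feferman truth: `CKF` and `CKFcp` -/

def axT7 : Fml :=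
  .all 0 (.all 1 (((Fml.ct v0).and (Fml.ct v1)).imp
    (Fml.iff (sTT (.feq v0 v1)) (.eq (.evalt v0) (.evalt v1)))))

def axT8 : Fml :=
  .all 0 (.all 1 (((Fml.ct v0).and (Fml.ct v1)).imp
    (Fml.iff (sTF (.feq v0 v1)) (Fml.not (.eq (.evalt v0) (.evalt v1))))))

def axT9 : Fml :=
  .all 0 ((Fml.sentT v0).imp (Fml.iff (sTT v0) (sTT (.fneg (.fneg v0)))))

def axT10 : Fml :=
  .all 0 (.all 1 (((Fml.sentT v0).and (Fml.sentT v1)).imp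
    (Fml.iff (sTT (.fand v0 v1)) ((sTT v0).and (sTT v1)))))

def axT11 : Fml :=
  .all 0 (.all 1 (((Fml.sentT v0).and (Fml.sentT v1)).imp
    (Fml.iff (sTF (.fand v0 v1)) ((sTF v0).or (sTF v1)))))

def axT12 : Fml :=
  .all 0 (.all 1 ((Fml.fml1T v0 v1).imp
    (Fml.iff (sTT (.fall v0 v1)) (Fml.T (.uall v0 v1)))))

def axT13 : Fml :=
  .all 0 (.all 1 ((Fml.fml1T v0 v1).imp
    (Fml.iff (sTF (.fall v0 v1)) (Fml.T (.uex v0 v1)))))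

def axT14 : Fml :=
  .all 0 ((Fml.ct v0).imp (Fml.iff (sTT (tmT v0)) (tTT v0)))

def axT15 : Fml :=
  .all 0 ((Fml.ct v0).imp (Fml.iff (sTF (tmT v0)) (tTF v0)))

/-- `TDel : ∀t(TTt → Tt°)`. -/
def axTDel : Fml :=
  .all 0 ((Fml.ct v0).imp ((tTT v0).imp (Fml.T (.evalt v0))))

/-- `TRep : ∀t(Tt° → TTt)`. -/
def axTRep : Fml :=
  .all 0 ((Fml.ct v0).imp ((Fml.T (.evalt v0)).imp (tTT v0)))

/-- `CKF` without its consistency axiom `TDel`. -/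
noncomputable def CKFminus : Set Fml :=
  BaseTh ∪ IndTh ∪
    {axT1, axT4 Fml.sentT, axT5 Fml.sentT, axT6 Fml.fml1T,
     axT7, axT8, axT9, axT10, axT11, axT12, axT13, axT14, axT15,
     axR1 Fml.fml1T}

/-- The classical closure `CKF` of `KF + CONS`. -/
noncomputable def CKF : Set Fml := insert axTDel CKFminus

/-- The classical closure `CKFcp` of `KF + COMP`. -/
noncomputable def CKFcp : Set Fml := insert axTRep CKFminus

/-! ## `KF + CONS` and `CT[KF + CONS]` -/

def axKF1 : Fml :=
  .all 0 (.all 1 (((Fml.ct v0).and (Fml.ct v1)).imp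
    ((Fml.iff (Fml.T (.feq v0 v1)) (.eq (.evalt v0) (.evalt v1))).and
     (Fml.iff (Fml.T (.fneg (.feq v0 v1))) (Fml.not (.eq (.evalt v0) (.evalt v1)))))))

def axKF2 : Fml :=
  .all 0 ((Fml.ct v0).imp
    ((Fml.iff (Fml.T (tmT v0)) (Fml.T (.evalt v0))).and
     (Fml.iff (Fml.T (.fneg (tmT v0)))
       ((Fml.T (.fneg (.evalt v0))).or (Fml.not (Fml.sentT (.evalt v0)))))))

def axKF3 : Fml :=
  .all 0 ((Fml.sentT v0).imp
    (Fml.iff (Fml.T (.fneg (.fneg v0))) (Fml.T v0)))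

def axKF4 : Fml :=
  .all 0 (.all 1 (((Fml.sentT v0).and (Fml.sentT v1)).imp
    ((Fml.iff (Fml.T (.fand v0 v1)) ((Fml.T v0).and (Fml.T v1))).and
     (Fml.iff (Fml.T (.fneg (.fand v0 v1)))
       ((Fml.T (.fneg v0)).or (Fml.T (.fneg v1)))))))

def axKF5 : Fml :=
  .all 0 (.all 1 ((Fml.fml1T v0 v1).imp
    ((Fml.iff (Fml.T (.fall v0 v1))
        (.all 2 ((Fml.ct v2).imp (Fml.T (.fsub v1 v2 v0))))).and
     (Fml.iff (Fml.T (.fneg (.fall v0 (.fneg v1))))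
        (Fml.ex 2 ((Fml.ct v2).and (Fml.T (.fsub v1 v2 v0))))))))

/-- `CONS : ∀φ(Fφ → ¬Tφ)`. -/
def axCons : Fml :=
  .all 0 ((Fml.sentT v0).imp ((Fml.T (.fneg v0)).imp (Fml.not (Fml.T v0))))

/-- `COMP : ∀φ(¬Tφ → Fφ)`. -/
def axComp : Fml :=
  .all 0 ((Fml.sentT v0).imp ((Fml.not (Fml.T v0)).imp (Fml.T (.fneg v0))))

noncomputable def KFCONS : Set Fml :=
  BaseTh ∪ IndTh ∪ {axKF1, axKF2, axKF3, axKF4, axKF5, axCons}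

def axTb1 : Fml :=
  .all 0 (.all 1 (((Fml.ct v0).and (Fml.ct v1)).imp
    (Fml.iff (Fml.Tb (.feq v0 v1)) (.eq (.evalt v0) (.evalt v1)))))

def axTb1b : Fml :=
  .all 0 ((Fml.ct v0).imp (Fml.iff (Fml.Tb (tmT v0)) (Fml.T (.evalt v0))))

def axTb2 : Fml :=
  .all 0 ((Fml.sentT v0).imp
    (Fml.iff (Fml.Tb (.fneg v0)) (Fml.not (Fml.Tb v0))))

def axTb3 : Fml :=
  .all 0 (.all 1 (((Fml.sentT v0).and (Fml.sentT v1)).imp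
    (Fml.iff (Fml.Tb (.fand v0 v1)) ((Fml.Tb v0).and (Fml.Tb v1)))))

def axTb4 : Fml :=
  .all 0 (.all 1 ((Fml.fml1T v0 v1).imp
    (Fml.iff (Fml.Tb (.fall v0 v1))
      (.all 2 ((Fml.ct v2).imp (Fml.Tb (.fsub v1 v2 v0)))))))

/-- `CT[KF + CONS]`: `KF + CONS` with a Tarskian truth predicate `𝐓` on top. -/
noncomputable def CTKFC : Set Fml :=
  KFCONS ∪ {axTb1, axTb1b, axTb2, axTb3, axTb4}

/-! ## The Strong Kleene jump and its fixed points -/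

/-- The Strong Kleene jump `𝒦` on sets of codes of `L_T`-sentences. -/
noncomputable def K (X : Set ℕ) : Set ℕ :=
  {n | isSentTC n ∧ (
    (∃ s t : Term, s.fv = ∅ ∧ t.fv = ∅ ∧ n = (Fml.eq s t).code ∧ tval s = tval t) ∨
    (∃ s t : Term, s.fv = ∅ ∧ t.fv = ∅ ∧ n = (Fml.eq s t).not.code ∧ tval s ≠ tval t) ∨
    (∃ t : Term, t.fv = ∅ ∧ n = (Fml.T t).code ∧ tval t ∈ X) ∨
    (∃ t : Term, t.fv = ∅ ∧ n = (Fml.T t).not.code ∧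
      (opFneg (tval t) ∈ X ∨ ¬ isSentTC (tval t))) ∨
    (∃ t : Term, t.fv = ∅ ∧ n = (Fml.ct t).code ∧ isCT (tval t)) ∨
    (∃ t : Term, t.fv = ∅ ∧ n = (Fml.ct t).not.code ∧ ¬ isCT (tval t)) ∨
    (∃ t : Term, t.fv = ∅ ∧ n = (Fml.sentT t).code ∧ isSentTC (tval t)) ∨
    (∃ t : Term, t.fv = ∅ ∧ n = (Fml.sentT t).not.code ∧ ¬ isSentTC (tval t)) ∨
    (∃ t : Term, t.fv = ∅ ∧ n = (Fml.sentD t).code ∧ isSentDC (tval t)) ∨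
    (∃ t : Term, t.fv = ∅ ∧ n = (Fml.sentD t).not.code ∧ ¬ isSentDC (tval t)) ∨
    (∃ s t : Term, s.fv = ∅ ∧ t.fv = ∅ ∧ n = (Fml.fml1T s t).code ∧
      isFml1TC (tval s) (tval t)) ∨
    (∃ s t : Term, s.fv = ∅ ∧ t.fv = ∅ ∧ n = (Fml.fml1T s t).not.code ∧
      ¬ isFml1TC (tval s) (tval t)) ∨
    (∃ s t : Term, s.fv = ∅ ∧ t.fv = ∅ ∧ n = (Fml.fml1D s t).code ∧
      isFml1DC (tval s) (tval t)) ∨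
    (∃ s t : Term, s.fv = ∅ ∧ t.fv = ∅ ∧ n = (Fml.fml1D s t).not.code ∧
      ¬ isFml1DC (tval s) (tval t)) ∨
    (∃ A : Fml, n = A.not.not.code ∧ A.code ∈ X) ∨
    (∃ A B : Fml, n = (A.and B).code ∧ A.code ∈ X ∧ B.code ∈ X) ∨
    (∃ A B : Fml, n = (A.and B).not.code ∧ (A.not.code ∈ X ∨ B.not.code ∈ X)) ∨
    (∃ (k : ℕ) (A : Fml), n = (Fml.all k A).code ∧
      ∀ t : Term, t.fv = ∅ → (A.subst k t).code ∈ X) ∨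
    (∃ (k : ℕ) (A : Fml), n = (Fml.all k A).not.code ∧
      ∃ t : Term, t.fv = ∅ ∧ (A.subst k t).not.code ∈ X))}

/-- `X` is a fixed point of the Strong Kleene jump. -/
noncomputable def IsFP (X : Set ℕ) : Prop := K X = X

/-- `X` is consistent: no sentence is in `X` together with its negation. -/
def ConsistentS (X : Set ℕ) : Prop :=
  ∀ A : Fml, ¬ (A.code ∈ X ∧ A.not.code ∈ X)

/-- `X` is complete: every `L_T`-sentence or its negation is in `X`. -/
def CompleteS (X : Set ℕ) : Prop :=
  ∀ A : Fml, IsSentT A → (A.code ∈ X ∨ A.not.code ∈ X)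

/-- `𝕋_X`: the set of (codes of) `L_T`-sentences true in `(ℕ, X)` — the
classical closure of `X`. -/
def TrueSet (X : Set ℕ) : Set ℕ :=
  {n | ∃ A : Fml, A.code = n ∧ IsSentT A ∧ SatN X A}

/-- The inner extension `S^𝒮 = {A : (ℕ, S) ⊨ T⌜T⌜A⌝⌝}`. -/
def SI (S : Set ℕ) : Set ℕ :=
  {n | ∃ A : Fml, A.code = n ∧ IsSentT A ∧
    SatN S (Fml.T (numeral ((Fml.T (numeral A.code)).code)))}

/-! ## The Fujimoto–Halbach model construction for `CD⁺` -/

/-- The positive inductive operator `Γ_Y(X)` associated with the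
(right-to-left directions of) the determinateness axioms `D1`–`D6`. -/
noncomputable def Gamma (Y X : Set ℕ) : Set ℕ :=
  {n | isSentDC n ∧ (
    (∃ s t : Term, s.fv = ∅ ∧ t.fv = ∅ ∧ n = (Fml.eq s t).code) ∨
    (∃ t : Term, t.fv = ∅ ∧ n = (Fml.T t).code ∧ tval t ∈ X) ∨
    (∃ t : Term, t.fv = ∅ ∧ n = (Fml.D t).code ∧ tval t ∈ X) ∨
    (∃ A : Fml, n = A.not.code ∧ A.code ∈ X) ∨
    (∃ A B : Fml, n = (A.and B).code ∧
      ((A.code ∈ X ∧ B.code ∈ X) ∨ (A.code ∈ X ∧ A.not.code ∈ Y) ∨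
        (B.code ∈ X ∧ B.not.code ∈ Y))) ∨
    (∃ (k : ℕ) (A : Fml), n = (Fml.all k A).code ∧
      ((∀ t : Term, t.fv = ∅ → (A.subst k t).code ∈ X) ∨
        (∃ t : Term, t.fv = ∅ ∧ (A.subst k t).code ∈ X ∧
          (A.subst k t).not.code ∈ Y))))}

/-- The set of codes of `L_D`-sentences true in `(ℕ, XD, XT)`. -/
def TrueSetD (XD XT : Set ℕ) : Set ℕ :=
  {n | ∃ A : Fml, A.code = n ∧ IsSentD A ∧ SatND XD XT A}

/-- The Fujimoto–Halbach simultaneous transfinite recursion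
`(D_α, T_α)` (Def. on p. `semcdp` of the paper). -/
noncomputable def FH : Ordinal.{0} → Set ℕ × Set ℕ := fun α =>
  Ordinal.limitRecOn α (∅, ∅)
    (fun _ p => (Gamma p.2 p.1, TrueSetD p.1 p.2))
    (fun β _ ih =>
      ({n | ∃ (γ : Ordinal) (h : γ < β), n ∈ (ih γ h).1},
       {n | ∃ (γ : Ordinal) (h : γ < β), n ∈ (ih γ h).1 ∩ (ih γ h).2}))

/-- `D∞ = D_{ω₁}`. -/
noncomputable def DInf : Set ℕ := (FH (Cardinal.aleph 1).ord).1
/-- `T∞ = T_{ω₁}`. -/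
noncomputable def TInf : Set ℕ := (FH (Cardinal.aleph 1).ord).2

/-! ## `L_ℕ`-translations and the dual translation -/

/-- An `L_ℕ`-translation: it does not relativize quantifiers, commutes with
the logical operations, and is the identity on the arithmetical-syntactic
vocabulary (only the atoms `T`, `D`, `𝐓` may be re-interpreted). -/
structure LNTrans where
  d : Fml → Fml
  map_eq : ∀ s t, d (Fml.eq s t) = Fml.eq s t
  map_ct : ∀ t, d (Fml.ct t) = Fml.ct t
  map_sentT : ∀ t, d (Fml.sentT t) = Fml.sentT t
  map_sentD : ∀ t, d (Fml.sentD t) = Fml.sentD t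
  map_fml1T : ∀ s t, d (Fml.fml1T s t) = Fml.fml1T s t
  map_fml1D : ∀ s t, d (Fml.fml1D s t) = Fml.fml1D s t
  map_not : ∀ A, d A.not = (d A).not
  map_and : ∀ A B, d (A.and B) = (d A).and (d B)
  map_all : ∀ k A, d (Fml.all k A) = Fml.all k (d A)

/-- `Th₂` `L_ℕ`-interprets `Th₁`. -/
def LNInterp (Th₁ Th₂ : Set Fml) : Prop :=
  ∃ τ : LNTrans, ∀ A : Fml, Proves Th₁ A → Proves Th₂ (τ.d A)

/-- Mutual `L_ℕ`-interpretability. -/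
def MutualLNInterp (Th₁ Th₂ : Set Fml) : Prop :=
  LNInterp Th₁ Th₂ ∧ LNInterp Th₂ Th₁

/-- Cantini's dual translation `c`: it preserves the arithmetical vocabulary,
commutes with the logical operations, and maps `T x` to `¬F x`. -/
def Fml.dual : Fml → Fml
  | .eq s t => .eq s t
  | .T t => (Fml.T (.fneg t)).not
  | .D t => .D t
  | .Tb t => .Tb t
  | .ct t => .ct t
  | .sentT t => .sentT t
  | .sentD t => .sentD t
  | .fml1T s t => .fml1T s t
  | .fml1D s t => .fml1D s t
  | .not A => A.dual.not
  | .and A B => A.dual.and B.dual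
  | .all k A => .all k A.dual

/-!
Interpret `D` by the least fixed point of the clauses D1–D6 (`Det`, which also records the truth
value of each determinate sentence) and `T` by the set of `L_D`-sentences true in an inner model
whose truth predicate agrees with `Det` on determinate sentences. The Tarskian axioms hold because
`T` is a truth set, D1–D6 and R2 because `Det` is their fixed point, and T3 because it only demands
`TTφ ↔ Tφ` for determinate `φ`. On indeterminate sentences the inner truth predicate is free:
declaring the indeterminate sentence `T 0` true there makes `TT⌜T 0⌝` hold while `D⌜T 0⌝` fails.
-/

theorem Term.code_injective : Function.Injective Term.code := by
  intro s
  induction s <;> intro t h <;> cases t <;>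
    simp_all [Term.code, Nat.pair_eq_pair] <;> aesop

theorem Fml.code_injective : Function.Injective Fml.code := by
  intro A
  induction A <;> intro B h <;> cases B <;>
    simp_all [Fml.code, Nat.pair_eq_pair, Term.code_injective.eq_iff] <;> aesop

theorem Fml.code_ne_zero (A : Fml) : A.code ≠ 0 := by
  have h (a b : ℕ) (ha : 101 ≤ a) : Nat.pair a b ≠ 0 := by
    have := Nat.left_le_pair a b
    omega
  cases A <;> exact h _ _ (by norm_num)

@[simp]
theorem decT_code (t : Term) : decT t.code = some t := by
  have h : ∃ s : Term, s.code = t.code := ⟨t, rfl⟩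
  rw [decT, dif_pos h, Term.code_injective h.choose_spec]

@[simp]
theorem decF_code (A : Fml) : decF A.code = some A := by
  have h : ∃ B : Fml, B.code = A.code := ⟨A, rfl⟩
  rw [decF, dif_pos h, Fml.code_injective h.choose_spec]

noncomputable abbrev Term.value (t : Term) : ℕ := t.val0 fun _ => 0

section Operations

variable (s t : Term) (A B : Fml) (k : ℕ)

@[simp] theorem opFneg_code : opFneg A.code = A.not.code := by simp [opFneg]
@[simp] theorem opFand_code : opFand A.code B.code = (A.and B).code := by simp [opFand]
@[simp] theorem opFall_code : opFall k A.code = (Fml.all k A).code := by simp [opFall]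
@[simp] theorem opFeq_code : opFeq s.code t.code = (Fml.eq s t).code := by simp [opFeq]
@[simp] theorem opFT_code : opFT t.code = (Fml.T t).code := by simp [opFT]
@[simp] theorem opFD_code : opFD t.code = (Fml.D t).code := by simp [opFD]
@[simp] theorem opFsub_code : opFsub A.code t.code k = (A.subst k t).code := by simp [opFsub]
@[simp] theorem opEval_code : opEval t.code = t.value := by simp [opEval]

end Operations

@[simp]
theorem numeral_fv (m : ℕ) : (numeral m).fv = ∅ := by
  induction m <;> simp_all [numeral, Term.fv]

@[simp]
theorem Term.val0_numeral (σ : ℕ → ℕ) (m : ℕ) : (numeral m).val0 σ = m := by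
  induction m <;> simp_all [numeral, Term.val0]

section Semantics

variable {S : Struc}

theorem Term.evalS_congr {σ σ' : ℕ → S.M} (t : Term) (h : ∀ n ∈ t.fv, σ n = σ' n) :
    t.evalS S σ = t.evalS S σ' := by
  induction t <;> simp_all [Term.evalS, Term.fv]

theorem Term.evalS_subst (σ : ℕ → S.M) (k : ℕ) (t u : Term) :
    (Term.subst k t u).evalS S σ = u.evalS S (Function.update σ k (t.evalS S σ)) := by
  induction u <;> simp_all [Term.subst, Term.evalS]
  split_ifs with h <;> simp [h, Term.evalS]

theorem Fml.SatS_congr {σ σ' : ℕ → S.M} (A : Fml) (h : ∀ n ∈ A.fv, σ n = σ' n) :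
    A.SatS S σ ↔ A.SatS S σ' := by
  induction A generalizing σ σ' with
  | not A ih => exact not_congr (ih h)
  | and A B ihA ihB =>
    exact and_congr (ihA fun n hn => h n (by simp [Fml.fv, hn]))
      (ihB fun n hn => h n (by simp [Fml.fv, hn]))
  | all k A ih =>
    refine forall_congr' fun m => ih fun n hn => ?_
    rcases eq_or_ne n k with rfl | hnk
    · simp
    · simpa [hnk] using h n (Finset.mem_erase.2 ⟨hnk, hn⟩)
  | _ =>
    simp only [Fml.SatS]
    congr! 1 <;> exact Term.evalS_congr _ fun n hn => h n (by simp [Fml.fv, hn])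

theorem Fml.SatS_subst {k : ℕ} {t : Term} (ht : t.fv ⊆ {k}) (A : Fml) (σ : ℕ → S.M) :
    (A.subst k t).SatS S σ ↔ A.SatS S (Function.update σ k (t.evalS S σ)) := by
  induction A generalizing σ with
  | not A ih => exact not_congr (ih σ)
  | and A B ihA ihB => exact and_congr (ihA σ) (ihB σ)
  | all j A ih =>
    rcases eq_or_ne j k with rfl | hjk
    · simp [Fml.subst, Fml.SatS]
    · simp only [Fml.subst, if_neg hjk, Fml.SatS]
      refine forall_congr' fun m => ?_
      have het : t.evalS S (Function.update σ j m) = t.evalS S σ :=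
        Term.evalS_congr t fun n hn => by
          rw [Finset.mem_singleton.1 (ht hn), Function.update_of_ne (Ne.symm hjk)]
      rw [ih, het, Function.update_comm hjk]
  | _ => simp [Fml.subst, Fml.SatS, Term.evalS_subst]

@[simp]
theorem Fml.SatS_imp {σ : ℕ → S.M} {A B : Fml} :
    (A.imp B).SatS S σ ↔ (A.SatS S σ → B.SatS S σ) := by
  simp only [Fml.imp, Fml.SatS]
  tauto

@[simp]
theorem Fml.SatS_or {σ : ℕ → S.M} {A B : Fml} :
    (A.or B).SatS S σ ↔ A.SatS S σ ∨ B.SatS S σ := by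
  simp only [Fml.or, Fml.SatS]
  tauto

@[simp]
theorem Fml.SatS_iff {σ : ℕ → S.M} {A B : Fml} :
    (A.iff B).SatS S σ ↔ (A.SatS S σ ↔ B.SatS S σ) := by
  simp only [Fml.iff, Fml.SatS, Fml.SatS_imp]
  tauto

@[simp]
theorem Fml.SatS_ex {σ : ℕ → S.M} {k : ℕ} {A : Fml} :
    (Fml.ex k A).SatS S σ ↔ ∃ m, A.SatS S (Function.update σ k m) := by
  simp [Fml.ex, Fml.SatS]

theorem Fml.SatS_close {A : Fml} (h : ∀ σ, A.SatS S σ) (σ : ℕ → S.M) : A.close.SatS S σ := by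
  rw [Fml.close]
  induction A.fv.sort (· ≤ ·) generalizing σ with
  | nil => exact h σ
  | cons k l ih => exact fun m => ih _

theorem Fml.SatS_of_mem_IndTh
    (hind : ∀ P : S.M → Prop, P S.zero → (∀ m, P m → P (S.succ m)) → ∀ m, P m)
    {A : Fml} (hA : A ∈ IndTh) (σ : ℕ → S.M) : A.SatS S σ := by
  obtain ⟨k, A, rfl⟩ := hA
  refine Fml.SatS_close (fun σ => Fml.SatS_imp.2 ?_) σ
  rintro ⟨h0, hs⟩
  refine hind _ ((Fml.SatS_subst (by simp [Term.fv]) A σ).1 h0) fun m ih => ?_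
  have h := (Fml.SatS_subst (by simp [Term.fv]) A _).1 (Fml.SatS_imp.1 (hs m) ih)
  simpa [Term.evalS] using h

end Semantics

section StandardModels

variable {X Y Z X' Y' Z' : Set ℕ}

theorem Term.evalS_stdStruc (σ : ℕ → ℕ) (t : Term) :
    t.evalS (stdStruc X Y Z) σ = t.evalS (stdStruc X' Y' Z') σ := by
  induction t <;> simp_all [Term.evalS, stdStruc]

theorem Fml.SatS_stdStruc_of_noT_noD_noTb {A : Fml} (hT : A.noT) (hD : A.noD) (hTb : A.noTb)
    (σ : ℕ → ℕ) : A.SatS (stdStruc X Y Z) σ ↔ A.SatS (stdStruc X' Y' Z') σ := by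
  induction A generalizing σ with
  | T | D | Tb => contradiction
  | not A ih => exact not_congr (ih hT hD hTb σ)
  | and A B ihA ihB => exact and_congr (ihA hT.1 hD.1 hTb.1 σ) (ihB hT.2 hD.2 hTb.2 σ)
  | all k A ih => exact forall_congr' fun m => ih hT hD hTb _
  | _ => simp only [Fml.SatS, Term.evalS_stdStruc (X' := X') (Y' := Y') (Z' := Z')]; rfl

theorem Fml.SatS_stdStruc_of_mem_BaseTh {A : Fml} (hA : A ∈ BaseTh) (σ : ℕ → ℕ) :
    A.SatS (stdStruc X Y Z) σ := by
  obtain ⟨hT, hD, hTb, hfv, htrue⟩ := hA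
  rw [Fml.SatS_stdStruc_of_noT_noD_noTb hT hD hTb (X' := ∅) (Y' := ∅) (Z' := ∅)]
  exact (Fml.SatS_congr (S := stdStruc ∅ ∅ ∅) A (by simp [hfv])).1 htrue

theorem Fml.SatS_stdStruc_of_mem_IndTh {A : Fml} (hA : A ∈ IndTh) (σ : ℕ → ℕ) :
    A.SatS (stdStruc X Y Z) σ :=
  Fml.SatS_of_mem_IndTh (S := stdStruc X Y Z) (fun P h0 hs m => Nat.rec (motive := P) h0 hs m) hA σ

end StandardModels

section Substitution

variable {k : ℕ} {t : Term}

theorem Term.subst_eq_self {u : Term} (h : k ∉ u.fv) (s : Term) : Term.subst k s u = u := by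
  induction u <;> simp_all [Term.subst, Term.fv]
  omega

theorem Term.fv_subst (ht : t.fv = ∅) (u : Term) : (Term.subst k t u).fv = u.fv.erase k := by
  induction u <;> simp_all [Term.subst, Term.fv, Finset.erase_union_distrib]
  split_ifs with h
  · simp [h, ht]
  · simp [Term.fv, Finset.erase_eq_of_notMem, Ne.symm h]

theorem Fml.fv_subst (ht : t.fv = ∅) (A : Fml) : (A.subst k t).fv = A.fv.erase k := by
  induction A <;> simp_all [Fml.subst, Fml.fv, Term.fv_subst ht, Finset.erase_union_distrib]
  split_ifs with h
  · simp [h, Fml.fv]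
  · simp [Fml.fv, *, Finset.erase_right_comm]

@[simp]
theorem Fml.noTb_subst (A : Fml) : (A.subst k t).noTb ↔ A.noTb := by
  induction A <;> simp_all [Fml.subst, Fml.noTb]
  split_ifs <;> simp [Fml.noTb, *]

theorem Term.subst_comm {j : ℕ} (hjk : j ≠ k) {u : Term} (ht : t.fv = ∅) (hu : u.fv = ∅)
    (w : Term) : Term.subst j u (Term.subst k t w) = Term.subst k t (Term.subst j u w) := by
  induction w <;> simp_all [Term.subst]
  split_ifs <;> simp_all [Term.subst, Term.subst_eq_self]

theorem Fml.subst_comm {j : ℕ} (hjk : j ≠ k) {u : Term} (ht : t.fv = ∅) (hu : u.fv = ∅)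
    (A : Fml) : (A.subst k t).subst j u = (A.subst j u).subst k t := by
  induction A <;> simp_all [Fml.subst, Term.subst_comm hjk ht hu]
  split_ifs <;> simp_all [Fml.subst]

theorem IsSentD.eq {s u : Term} (hs : s.fv = ∅) (hu : u.fv = ∅) : IsSentD (.eq s u) :=
  ⟨trivial, by simp [Fml.fv, hs, hu]⟩

theorem IsSentD.T {u : Term} (hu : u.fv = ∅) : IsSentD (.T u) := ⟨trivial, hu⟩

theorem IsSentD.D {u : Term} (hu : u.fv = ∅) : IsSentD (.D u) := ⟨trivial, hu⟩

theorem IsSentD.not {A : Fml} (hA : IsSentD A) : IsSentD A.not := hA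

theorem IsSentD.and {A B : Fml} (hA : IsSentD A) (hB : IsSentD B) : IsSentD (A.and B) :=
  ⟨⟨hA.1, hB.1⟩, by simp [Fml.fv, hA.2, hB.2]⟩

theorem IsSentD.all {A : Fml} (hTb : A.noTb) (hfv : A.fv ⊆ {k}) : IsSentD (.all k A) :=
  ⟨hTb, by rw [Fml.fv, Finset.erase_eq_empty_iff]; exact Finset.subset_singleton_iff.1 hfv⟩

theorem IsSentD.subst {A : Fml} (hTb : A.noTb) (hfv : A.fv ⊆ {k}) (ht : t.fv = ∅) :
    IsSentD (A.subst k t) :=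
  ⟨(Fml.noTb_subst A).2 hTb, by rw [Fml.fv_subst ht]; exact (IsSentD.all hTb hfv).2⟩

def Fml.complexity : Fml → ℕ
  | .not A => A.complexity + 1
  | .and A B => A.complexity + B.complexity + 1
  | .all _ A => A.complexity + 1
  | _ => 0

@[simp]
theorem Fml.complexity_subst (A : Fml) : (A.subst k t).complexity = A.complexity := by
  induction A <;> simp_all [Fml.subst, Fml.complexity]
  split_ifs <;> simp [Fml.complexity, *]

end Substitution

/-- `evalt` is interpreted as `0`, so that terms take their `val0` values, which is how `opEval`
evaluates the codes of closed terms in T1–T3 and R1. -/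
noncomputable abbrev innerStruc (YT YD : Set ℕ) : Struc :=
  { stdStruc YT YD ∅ with M := ℕ, evalt := fun _ => 0 }

@[simp]
theorem Term.evalS_innerStruc (YT YD : Set ℕ) (σ : ℕ → ℕ) (t : Term) :
    t.evalS (innerStruc YT YD) σ = t.val0 σ := by
  induction t <;> simp_all [Term.evalS, Term.val0, innerStruc, stdStruc]

theorem Term.val0_subst (σ : ℕ → ℕ) (k : ℕ) (t u : Term) :
    (Term.subst k t u).val0 σ = u.val0 (Function.update σ k (t.val0 σ)) := by
  induction u <;> simp_all [Term.subst, Term.val0]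
  split_ifs with h <;> simp [h, Term.val0]

/-- `Det b A`: the `L_D`-sentence `A` lies in the least fixed point of D1–D6, with the truth
value `b` that the clauses force on it. -/
inductive Det : Bool → Fml → Prop where
  | eq_true {s t : Term} (hs : s.fv = ∅) (ht : t.fv = ∅) (h : s.value = t.value) :
      Det true (.eq s t)
  | eq_false {s t : Term} (hs : s.fv = ∅) (ht : t.fv = ∅) (h : s.value ≠ t.value) :
      Det false (.eq s t)
  | T {b : Bool} {u : Term} {A : Fml} (hu : u.fv = ∅) (hc : A.code = u.value) (h : Det b A) :
      Det b (.T u)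
  | D {b : Bool} {u : Term} {A : Fml} (hu : u.fv = ∅) (hc : A.code = u.value) (h : Det b A) :
      Det true (.D u)
  | not {b : Bool} {A : Fml} (h : Det b A) : Det (!b) A.not
  | and_true {A B : Fml} (hA : Det true A) (hB : Det true B) : Det true (A.and B)
  | and_false_left {A B : Fml} (hA : Det false A) (hB : IsSentD B) : Det false (A.and B)
  | and_false_right {A B : Fml} (hA : IsSentD A) (hB : Det false B) : Det false (A.and B)
  | all_true {k : ℕ} {A : Fml} (hTb : A.noTb) (hfv : A.fv ⊆ {k})
      (h : ∀ t : Term, t.fv = ∅ → Det true (A.subst k t)) : Det true (.all k A)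
  | all_false {k : ℕ} {A : Fml} (hTb : A.noTb) (hfv : A.fv ⊆ {k}) {t : Term} (ht : t.fv = ∅)
      (h : Det false (A.subst k t)) : Det false (.all k A)

namespace Det

theorem isSentD {b : Bool} {A : Fml} (h : Det b A) : IsSentD A := by
  induction h with
  | all_true hTb hfv | all_false hTb hfv => exact IsSentD.all hTb hfv
  | _ => simp_all [IsSentD, Fml.noTb, Fml.fv]

theorem unique {b b' : Bool} {A : Fml} (h : Det b A) (h' : Det b' A) : b = b' := by
  induction h generalizing b' with
  | T _ hc _ ih => cases h' with
    | T _ hc' h' => exact ih (Fml.code_injective (hc'.trans hc.symm) ▸ h')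
  | not _ ih => cases h' with | not h' => rw [ih h']
  | and_true _ _ ihA ihB => cases h' with
    | and_true => rfl
    | and_false_left h' => exact ihA h'
    | and_false_right _ h' => exact ihB h'
  | and_false_left _ _ ih => cases h' with
    | and_true h' => exact ih h'
    | _ => rfl
  | and_false_right _ _ ih => cases h' with
    | and_true _ h' => exact ih h'
    | _ => rfl
  | all_true _ _ _ ih => cases h' with
    | all_true => rfl
    | all_false _ _ ht h' => exact ih _ ht h'
  | all_false _ _ ht _ ih => cases h' with
    | all_true _ _ h' => exact ih (h' _ ht)
    | all_false => rfl
  | _ => cases h' <;> first | rfl | contradiction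

theorem not_T_zero (b : Bool) : ¬ Det b (.T (numeral 0)) := by
  rintro (_ | _ | ⟨_, hc, _⟩)
  exact Fml.code_ne_zero _ hc

theorem subst_congr {k : ℕ} {t t' : Term} (ht : t.fv = ∅) (ht' : t'.fv = ∅)
    (hval : t.value = t'.value) {b : Bool} {A : Fml} (h : Det b (A.subst k t)) :
    Det b (A.subst k t') := by
  have hfv (u : Term) : (Term.subst k t' u).fv = (Term.subst k t u).fv := by
    rw [Term.fv_subst ht, Term.fv_subst ht']
  have hvalue (u : Term) : (Term.subst k t' u).value = (Term.subst k t u).value := by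
    simp [Term.val0_subst, hval]
  have hsent {B : Fml} (hB : IsSentD (B.subst k t)) : IsSentD (B.subst k t') := by
    simpa [IsSentD, Fml.fv_subst ht, Fml.fv_subst ht'] using hB
  induction hn : A.complexity using Nat.strong_induction_on generalizing A b with
  | _ n ih =>
  cases A with
  | eq s u =>
    cases h with
    | eq_true hs hu h => exact .eq_true (by rwa [hfv]) (by rwa [hfv]) (by rwa [hvalue, hvalue])
    | eq_false hs hu h => exact .eq_false (by rwa [hfv]) (by rwa [hfv]) (by rwa [hvalue, hvalue])
  | T u => cases h with | T hu hc h => exact .T (by rwa [hfv]) (by rwa [hvalue]) h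
  | D u => cases h with | D hu hc h => exact .D (by rwa [hfv]) (by rwa [hvalue]) h
  | not A =>
    cases h with
    | not h => exact .not (ih _ (by simp [← hn, Fml.complexity]) h rfl)
  | and A B =>
    have hA : A.complexity < n := by simp [← hn, Fml.complexity]
    have hB : B.complexity < n := by simp [← hn, Fml.complexity]
    cases h with
    | and_true h₁ h₂ => exact .and_true (ih _ hA h₁ rfl) (ih _ hB h₂ rfl)
    | and_false_left h₁ h₂ => exact .and_false_left (ih _ hA h₁ rfl) (hsent h₂)
    | and_false_right h₁ h₂ => exact .and_false_right (hsent h₁) (ih _ hB h₂ rfl)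
  | all j A =>
    rcases eq_or_ne j k with rfl | hjk
    · simpa [Fml.subst] using h
    simp only [Fml.subst, if_neg hjk] at h ⊢
    have hinst {u : Term} (hu : u.fv = ∅) {c : Bool} (h : Det c ((A.subst k t).subst j u)) :
        Det c ((A.subst k t').subst j u) := by
      rw [Fml.subst_comm hjk ht hu] at h
      rw [Fml.subst_comm hjk ht' hu]
      exact ih _ (by simp [← hn, Fml.complexity]) h rfl
    have hfv' : (A.subst k t').fv = (A.subst k t).fv := by
      rw [Fml.fv_subst ht', Fml.fv_subst ht]
    cases h with
    | all_true hTb hfvA h =>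
      exact .all_true (by simpa using hTb) (hfv' ▸ hfvA) fun u hu => hinst hu (h u hu)
    | all_false hTb hfvA hu h => exact .all_false (by simpa using hTb) (hfv' ▸ hfvA) hu (hinst hu h)
  | _ => cases h

end Det

def detSet : Set ℕ := {n | ∃ (b : Bool) (A : Fml), A.code = n ∧ Det b A}

theorem code_mem_detSet {A : Fml} : A.code ∈ detSet ↔ ∃ b, Det b A := by
  simp [detSet, Fml.code_injective.eq_iff]

def innerSat (YT YD : Set ℕ) (A : Fml) : Prop := A.SatS (innerStruc YT YD) fun _ => (0 : ℕ)

section InnerModel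

variable {YT YD : Set ℕ}

@[simp]
theorem innerSat_eq (s t : Term) : innerSat YT YD (.eq s t) ↔ s.value = t.value := by
  simp [innerSat, Fml.SatS]

@[simp]
theorem innerSat_T (u : Term) : innerSat YT YD (.T u) ↔ u.value ∈ YT := by
  simp only [innerSat, Fml.SatS, Term.evalS_innerStruc]; rfl

@[simp]
theorem innerSat_D (u : Term) : innerSat YT YD (.D u) ↔ u.value ∈ YD := by
  simp only [innerSat, Fml.SatS, Term.evalS_innerStruc]; rfl

@[simp]
theorem innerSat_not (A : Fml) : innerSat YT YD A.not ↔ ¬ innerSat YT YD A := Iff.rfl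

@[simp]
theorem innerSat_and (A B : Fml) :
    innerSat YT YD (A.and B) ↔ innerSat YT YD A ∧ innerSat YT YD B := Iff.rfl

theorem innerSat_subst {k : ℕ} {t : Term} (ht : t.fv = ∅) (A : Fml) :
    innerSat YT YD (A.subst k t) ↔
      A.SatS (innerStruc YT YD) (Function.update (fun _ => (0 : ℕ)) k t.value) := by
  rw [innerSat, Fml.SatS_subst (by simp [ht]), Term.evalS_innerStruc]

theorem innerSat_all (k : ℕ) (A : Fml) :
    innerSat YT YD (.all k A) ↔ ∀ t : Term, t.fv = ∅ → innerSat YT YD (A.subst k t) := by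
  refine ⟨fun h t ht => (innerSat_subst ht A).2 (h _), fun h m => ?_⟩
  simpa [innerSat_subst] using h (numeral m) (numeral_fv m)

end InnerModel

def AgreesWithDet (YT : Set ℕ) : Prop := ∀ ⦃b : Bool⦄ ⦃A : Fml⦄, Det b A → (A.code ∈ YT ↔ b = true)

theorem Det.innerSat_iff {YT : Set ℕ} (hYT : AgreesWithDet YT) {b : Bool} {A : Fml}
    (h : Det b A) : innerSat YT detSet A ↔ b = true := by
  induction h with
  | eq_true _ _ h | eq_false _ _ h => simp [h]
  | T _ hc h => rw [innerSat_T, ← hc]; exact hYT h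
  | D _ hc h => simpa using ⟨_, _, hc, h⟩
  | not _ ih => cases ‹Bool› <;> simp_all
  | all_true _ _ _ ih => simpa [innerSat_all] using ih
  | all_false _ _ ht _ ih => simpa [innerSat_all] using ⟨_, ht, by simpa using ih⟩
  | _ => simp_all

def outerTruth (YT YD : Set ℕ) : Set ℕ :=
  {n | ∃ A : Fml, A.code = n ∧ IsSentD A ∧ innerSat YT YD A}

theorem code_mem_outerTruth {YT YD : Set ℕ} {A : Fml} (hA : IsSentD A) :
    A.code ∈ outerTruth YT YD ↔ innerSat YT YD A := by
  simp [outerTruth, Fml.code_injective.eq_iff, hA]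

section TarskiClauses

variable {YT YD XD Z : Set ℕ}

theorem sat_axT1 (σ : ℕ → ℕ) : axT1.SatS (stdStruc (outerTruth YT YD) XD Z) σ := by
  simp only [stdStruc, axT1, v0, v1, Fml.SatS, Fml.SatS_imp, isCT, Term.evalS, ne_eq, zero_ne_one,
    not_false_eq_true, Function.update_of_ne, Function.update_self, Fml.SatS_iff, and_imp,
    forall_exists_index]
  rintro _ _ u rfl hu w rfl hw
  rw [opFeq_code, opEval_code, opEval_code,
    code_mem_outerTruth (.eq hu hw), innerSat_eq]

theorem sat_axT4 (σ : ℕ → ℕ) : (axT4 Fml.sentD).SatS (stdStruc (outerTruth YT YD) XD Z) σ := by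
  simp only [stdStruc, axT4, v0, Fml.SatS, Fml.SatS_imp, isSentDC, Term.evalS,
    Function.update_self, Fml.SatS_iff, forall_exists_index, and_imp]
  rintro _ A rfl hA
  rw [opFneg_code, code_mem_outerTruth hA, code_mem_outerTruth hA.not, innerSat_not]

theorem sat_axT5 (σ : ℕ → ℕ) : (axT5 Fml.sentD).SatS (stdStruc (outerTruth YT YD) XD Z) σ := by
  simp only [stdStruc, axT5, v0, v1, Fml.SatS, Fml.SatS_imp, isSentDC, Term.evalS, ne_eq,
    zero_ne_one, not_false_eq_true, Function.update_of_ne, Function.update_self, Fml.SatS_iff,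
    and_imp, forall_exists_index]
  rintro _ _ A rfl hA B rfl hB
  rw [opFand_code, code_mem_outerTruth hA, code_mem_outerTruth hB,
    code_mem_outerTruth (hA.and hB), innerSat_and]

theorem sat_axT6 (σ : ℕ → ℕ) : (axT6 Fml.fml1D).SatS (stdStruc (outerTruth YT YD) XD Z) σ := by
  simp only [stdStruc, axT6, v0, v1, v2, Fml.SatS, Fml.SatS_imp, isFml1DC, Term.evalS,
    Function.update_self, ne_eq, zero_ne_one, not_false_eq_true, Function.update_of_ne,
    Fml.SatS_iff, isCT, OfNat.one_ne_ofNat, OfNat.zero_ne_ofNat, forall_exists_index, and_imp,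
    forall_comm (α := ℕ) (β := Term), forall_eq']
  rintro k _ A rfl hTb hfv
  rw [opFall_code, code_mem_outerTruth (.all hTb hfv), innerSat_all]
  exact forall₂_congr fun t ht => by rw [opFsub_code, code_mem_outerTruth (.subst hTb hfv ht)]

theorem sat_axR1 (σ : ℕ → ℕ) : (axR1 Fml.fml1D).SatS (stdStruc (outerTruth YT YD) XD Z) σ := by
  simp only [stdStruc, axR1, v0, v1, v2, v3, Fml.SatS, Fml.SatS_imp, isFml1DC, Term.evalS, ne_eq,
    OfNat.one_ne_ofNat, not_false_eq_true, Function.update_of_ne, Function.update_self,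
    OfNat.zero_ne_ofNat, zero_ne_one, isCT, Nat.reduceEqDiff, Fml.SatS_iff, and_imp,
    forall_exists_index]
  rintro k _ _ _ A rfl hTb hfv u rfl hu w rfl hw hval
  rw [opFsub_code, opFsub_code, code_mem_outerTruth (.subst hTb hfv hu),
    code_mem_outerTruth (.subst hTb hfv hw), innerSat_subst hu, innerSat_subst hw,
    ← opEval_code, ← opEval_code, hval]

theorem sat_axT2p (σ : ℕ → ℕ) :
    (axT2p Fml.D dcodePrim).SatS (stdStruc (outerTruth YT XD) XD Z) σ := by
  simp only [stdStruc, axT2p, v0, dcodePrim, Fml.SatS, Fml.SatS_imp, isCT, Term.evalS,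
    Function.update_self, Fml.SatS_iff, forall_exists_index, and_imp]
  rintro _ u rfl hu
  rw [opEval_code, opFD_code, code_mem_outerTruth (.D hu), innerSat_D]

end TarskiClauses

namespace Det

theorem T_iff {b : Bool} {u : Term} (hu : u.fv = ∅) :
    Det b (.T u) ↔ ∃ A : Fml, A.code = u.value ∧ Det b A := by
  refine ⟨fun h => ?_, fun ⟨_, hc, h⟩ => .T hu hc h⟩
  cases h with | T _ hc h => exact ⟨_, hc, h⟩

theorem exists_D_iff {u : Term} (hu : u.fv = ∅) :
    (∃ b, Det b (.D u)) ↔ ∃ (b : Bool) (A : Fml), A.code = u.value ∧ Det b A := by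
  refine ⟨fun ⟨_, h⟩ => ?_, fun ⟨_, _, hc, h⟩ => ⟨_, .D hu hc h⟩⟩
  cases h with | D _ hc h => exact ⟨_, _, hc, h⟩

theorem exists_not_iff {A : Fml} : (∃ b, Det b A.not) ↔ ∃ b, Det b A := by
  refine ⟨fun ⟨_, h⟩ => ?_, fun ⟨_, h⟩ => ⟨_, h.not⟩⟩
  cases h with | not h => exact ⟨_, h⟩

theorem true_of_not_false {b : Bool} {A : Fml} (h : Det b A) (hf : ¬ Det false A) : Det true A := by
  cases b
  · exact absurd h hf
  · exact h

theorem exists_and_iff {A B : Fml} (hA : IsSentD A) (hB : IsSentD B) :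
    (∃ b, Det b (A.and B)) ↔
      ((∃ b, Det b A) ∧ ∃ b, Det b B) ∨ Det false A ∨ Det false B := by
  constructor
  · rintro ⟨_, h⟩
    cases h with
    | and_true h₁ h₂ => exact .inl ⟨⟨_, h₁⟩, _, h₂⟩
    | and_false_left h₁ => exact .inr (.inl h₁)
    | and_false_right _ h₂ => exact .inr (.inr h₂)
  · rintro (⟨⟨_, h₁⟩, _, h₂⟩ | h₁ | h₂)
    · by_cases hf₁ : Det false A
      · exact ⟨_, .and_false_left hf₁ hB⟩
      by_cases hf₂ : Det false B
      · exact ⟨_, .and_false_right hA hf₂⟩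
      exact ⟨_, .and_true (h₁.true_of_not_false hf₁) (h₂.true_of_not_false hf₂)⟩
    · exact ⟨_, .and_false_left h₁ hB⟩
    · exact ⟨_, .and_false_right hA h₂⟩

theorem exists_all_iff {k : ℕ} {A : Fml} (hTb : A.noTb) (hfv : A.fv ⊆ {k}) :
    (∃ b, Det b (.all k A)) ↔
      (∀ t : Term, t.fv = ∅ → ∃ b, Det b (A.subst k t)) ∨
        ∃ t : Term, t.fv = ∅ ∧ Det false (A.subst k t) := by
  constructor
  · rintro ⟨_, h⟩
    cases h with
    | all_true _ _ h => exact .inl fun t ht => ⟨_, h t ht⟩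
    | all_false _ _ ht h => exact .inr ⟨_, ht, h⟩
  · rintro (h | ⟨t, ht, h⟩)
    · by_cases hf : ∃ t : Term, t.fv = ∅ ∧ Det false (A.subst k t)
      · obtain ⟨t, ht, h⟩ := hf
        exact ⟨_, .all_false hTb hfv ht h⟩
      simp only [not_exists, not_and] at hf
      refine ⟨_, .all_true hTb hfv fun t ht => ?_⟩
      obtain ⟨_, h⟩ := h t ht
      exact h.true_of_not_false (hf t ht)
    · exact ⟨_, .all_false hTb hfv ht h⟩

end Det

section DeterminatenessClauses

variable {YT Z : Set ℕ}

theorem det_false_iff (hYT : AgreesWithDet YT) {A : Fml} :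
    Det false A ↔ A.code ∈ detSet ∧ ¬ innerSat YT detSet A := by
  rw [code_mem_detSet]
  refine ⟨fun h => ⟨⟨_, h⟩, by simpa using h.innerSat_iff hYT⟩, fun ⟨⟨b, h⟩, hA⟩ => ?_⟩
  cases b
  · exact h
  · exact absurd ((h.innerSat_iff hYT).2 rfl) hA

theorem mem_outerTruth_iff_of_mem_detSet (hYT : AgreesWithDet YT) {n : ℕ} (hn : n ∈ detSet) :
    n ∈ outerTruth YT detSet ↔ n ∈ YT := by
  obtain ⟨b, A, rfl, h⟩ := hn
  rw [code_mem_outerTruth h.isSentD, h.innerSat_iff hYT, hYT h]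

theorem sat_axT3 (hYT : AgreesWithDet YT) (σ : ℕ → ℕ) :
    (axT3 Fml.D).SatS (stdStruc (outerTruth YT detSet) detSet Z) σ := by
  simp only [stdStruc, axT3, v0, tTT, tmT, Fml.SatS, Fml.SatS_imp, isCT, Term.evalS,
    Function.update_self, Fml.SatS_iff, forall_exists_index, and_imp]
  rintro _ u rfl hu hdet
  rw [opFT_code, opEval_code, code_mem_outerTruth (.T hu), innerSat_T]
  rw [opEval_code] at hdet
  exact (mem_outerTruth_iff_of_mem_detSet hYT hdet).symm

theorem sat_axD1 (σ : ℕ → ℕ) : (axD1 Fml.D).SatS (stdStruc (outerTruth YT detSet) detSet Z) σ := by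
  simp only [stdStruc, axD1, v0, v1, Fml.SatS, Fml.SatS_imp, isCT, Term.evalS, ne_eq, zero_ne_one,
    not_false_eq_true, Function.update_of_ne, Function.update_self, and_imp, forall_exists_index]
  rintro _ _ u rfl hu w rfl hw
  rw [opFeq_code, code_mem_detSet]
  by_cases h : u.value = w.value
  · exact ⟨_, .eq_true hu hw h⟩
  · exact ⟨_, .eq_false hu hw h⟩

theorem sat_axD2 (σ : ℕ → ℕ) : (axD2 Fml.D).SatS (stdStruc (outerTruth YT detSet) detSet Z) σ := by
  simp only [stdStruc, axD2, v0, tmT, Fml.SatS, Fml.SatS_imp, isCT, Term.evalS,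
    Function.update_self, Fml.SatS_iff, forall_exists_index, and_imp]
  rintro _ u rfl hu
  rw [opFT_code, opEval_code, code_mem_detSet]
  exact exists_congr fun _ => Det.T_iff hu

theorem sat_axD3 (σ : ℕ → ℕ) :
    (axD3 Fml.D dcodePrim).SatS (stdStruc (outerTruth YT detSet) detSet Z) σ := by
  simp only [stdStruc, axD3, v0, dcodePrim, Fml.SatS, Fml.SatS_imp, isCT, Term.evalS,
    Function.update_self, Fml.SatS_iff, forall_exists_index, and_imp]
  rintro _ u rfl hu
  rw [opFD_code, opEval_code, code_mem_detSet, Det.exists_D_iff hu]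
  rfl

theorem sat_axD4 (σ : ℕ → ℕ) :
    (axD4 Fml.D Fml.sentD).SatS (stdStruc (outerTruth YT detSet) detSet Z) σ := by
  simp only [stdStruc, axD4, v0, Fml.SatS, Fml.SatS_imp, isSentDC, Term.evalS,
    Function.update_self, Fml.SatS_iff, forall_exists_index, and_imp]
  rintro _ A rfl -
  rw [opFneg_code, code_mem_detSet, code_mem_detSet, Det.exists_not_iff]

theorem sat_axD5 (hYT : AgreesWithDet YT) (σ : ℕ → ℕ) :
    (axD5 Fml.D Fml.sentD).SatS (stdStruc (outerTruth YT detSet) detSet Z) σ := by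
  simp only [stdStruc, axD5, v0, v1, Fml.SatS, Fml.SatS_imp, isSentDC, Term.evalS, ne_eq,
    zero_ne_one, not_false_eq_true, Function.update_of_ne, Function.update_self, Fml.SatS_iff,
    Fml.SatS_or, and_imp, forall_exists_index]
  rintro _ _ A rfl hA B rfl hB
  rw [opFand_code, opFneg_code, opFneg_code, code_mem_outerTruth hA.not,
    code_mem_outerTruth hB.not, innerSat_not, innerSat_not, ← det_false_iff hYT,
    ← det_false_iff hYT, code_mem_detSet, code_mem_detSet, code_mem_detSet,
    Det.exists_and_iff hA hB, or_assoc]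

theorem sat_axD6 (hYT : AgreesWithDet YT) (σ : ℕ → ℕ) :
    (axD6 Fml.D Fml.fml1D).SatS (stdStruc (outerTruth YT detSet) detSet Z) σ := by
  simp only [stdStruc, axD6, v0, v1, v2, Fml.SatS, Fml.SatS_imp, isFml1DC, Term.evalS,
    Function.update_self, ne_eq, zero_ne_one, not_false_eq_true, Function.update_of_ne,
    Fml.SatS_iff, Fml.SatS_or, isCT, OfNat.one_ne_ofNat, OfNat.zero_ne_ofNat, forall_exists_index,
    and_imp, forall_comm (α := ℕ) (β := Term), forall_eq', Fml.SatS_ex, ↓existsAndEq, true_and]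
  rintro k _ A rfl hTb hfv
  simp only [opFall_code, opFsub_code, opFneg_code, code_mem_detSet]
  rw [Det.exists_all_iff hTb hfv]
  refine or_congr .rfl (exists_congr fun t => and_congr_right fun ht => ?_)
  rw [code_mem_outerTruth (IsSentD.subst hTb hfv ht).not, innerSat_not, det_false_iff hYT,
    code_mem_detSet]

theorem sat_axR2 (σ : ℕ → ℕ) :
    (axR2 Fml.D Fml.fml1D).SatS (stdStruc (outerTruth YT detSet) detSet Z) σ := by
  simp only [stdStruc, axR2, v0, v1, v2, v3, Fml.SatS, Fml.SatS_imp, isFml1DC, Term.evalS, ne_eq,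
    OfNat.one_ne_ofNat, not_false_eq_true, Function.update_of_ne, Function.update_self,
    OfNat.zero_ne_ofNat, zero_ne_one, isCT, Nat.reduceEqDiff, Fml.SatS_iff, and_imp,
    forall_exists_index]
  rintro k _ _ _ A rfl - - u rfl hu w rfl hw hval
  rw [opEval_code, opEval_code] at hval
  rw [opFsub_code, opFsub_code, code_mem_detSet, code_mem_detSet]
  exact exists_congr fun _ => ⟨Det.subst_congr hu hw hval, Det.subst_congr hw hu hval.symm⟩

end DeterminatenessClauses

theorem Proves.sat_of_modelsND {Th : Set Fml} {A : Fml} (h : Proves Th A) {XD XT : Set ℕ}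
    (hM : ModelsND XD XT Th) (σ : ℕ → ℕ) : A.SatS (stdStruc XT XD ∅) σ :=
  h (stdStruc XT XD ∅) σ hM

theorem modelsND_CDplus {YT : Set ℕ} (hYT : AgreesWithDet YT) :
    ModelsND detSet (outerTruth YT detSet) CDplus := by
  intro A hA σ
  simp only [CDplus, CDAx, Set.mem_union, Set.mem_insert_iff, Set.mem_singleton_iff] at hA
  rcases hA with (hA | hA) | rfl | rfl | rfl | rfl | rfl | rfl | rfl | rfl | rfl | rfl | rfl | rfl |
    rfl | rfl
  exacts [Fml.SatS_stdStruc_of_mem_BaseTh hA σ, Fml.SatS_stdStruc_of_mem_IndTh hA σ, sat_axT1 σ,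
    sat_axT2p σ, sat_axT3 hYT σ, sat_axT4 σ, sat_axT5 σ, sat_axT6 σ, sat_axD1 σ, sat_axD2 σ,
    sat_axD3 σ, sat_axD4 σ, sat_axD5 hYT σ, sat_axD6 hYT σ, sat_axR1 σ, sat_axR2 σ]

def witnessTruth : Set ℕ :=
  {n | ∃ A : Fml, A.code = n ∧ Det true A} ∪ {(Fml.T (numeral 0)).code}

theorem agreesWithDet_witnessTruth : AgreesWithDet witnessTruth := by
  intro b A h
  constructor
  · rintro (⟨B, hB, hB'⟩ | hA)
    · rw [Fml.code_injective hB] at hB'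
      exact h.unique hB'
    · rw [Fml.code_injective hA] at h
      exact absurd h (Det.not_T_zero b)
  · rintro rfl
    exact .inl ⟨A, rfl, h⟩

/-- `CD⁺` does not prove `(∀φ ∈ Sent(L_D))(TTφ ∨ TFφ → Dφ)`,
i.e. the converse of the `CD⁺`-provable implication `Dφ → TTφ ∨ TFφ` is
unprovable in `CD⁺`. -/
theorem cdplus_not_prove_converse_determinateness :
    ¬ Proves CDplus (Fml.all 0 ((Fml.sentD v0).imp
      (((sTT v0).or (sTF v0)).imp (Fml.D v0)))) := by
  intro hprov
  have hsat := hprov.sat_of_modelsND (modelsND_CDplus agreesWithDet_witnessTruth) fun _ => 0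
  simp only [Fml.SatS, stdStruc, v0, sTT, tmT, sTF, tmF, Fml.SatS_imp, isSentDC, Term.evalS,
    Function.update_self, Fml.SatS_or, forall_exists_index, and_imp] at hsat
  set ψ : Fml := .T (numeral 0)
  have hTT : opFT (opNum ψ.code) ∈ outerTruth witnessTruth detSet := by
    rw [opNum, opFT_code, code_mem_outerTruth (.T (numeral_fv _)), innerSat_T]
    simp [witnessTruth, ψ]
  obtain ⟨b, hdet⟩ := code_mem_detSet.1 (hsat _ ψ rfl (.T (numeral_fv 0)) (.inl hTT))
  exact Det.not_T_zero b hdet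

end CDT
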